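/- Let λ_k = k^2 for k ≥ 1 and let (a_k)_{k≥0} be an orthonormal basis of L^2(0,π) of Neumann Laplacian eigenfunctions, i.e. a_0(x) = 1/√π and a_k(x) = √(2/π)·cos(kx) for k ≥ 1. Then for every x ∈ (0,π) there exist constants C > 0 and ε_0 > 0 such that for all 0 < ε < ε_0: (1/2)·∑_{k=1}^∞ a_k(x)^2 · (1 − e^{−2λ_k^2·(2ε)})/(2λ_k^2) + ε·a_0(x)^2 ≥ C·(2ε)^{3/4}. -/
import Mathlib


/-- Neumann Laplacian eigenfunctions on (0,π). -/
noncomputable def neumannEigen (k : ℕ) (x : ℝ) : ℝ :=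
  if k = 0 then 1 / Real.sqrt Real.pi
  else Real.sqrt (2 / Real.pi) * Real.cos (k * x)

lemma aux_exp_lb {t : ℝ} (h0 : 0 ≤ t) (h4 : t ≤ 4) :
    t * Real.exp (-4) ≤ 1 - Real.exp (-t) := by
  have h1 : Real.exp (-4) ≤ Real.exp (-t) := Real.exp_le_exp.mpr (by linarith)
  have h3 : Real.exp t * Real.exp (-t) = 1 := by rw [← Real.exp_add]; simp
  have h5 : (t + 1) * Real.exp (-t) ≤ Real.exp t * Real.exp (-t) :=
    mul_le_mul_of_nonneg_right (Real.add_one_le_exp t) (Real.exp_pos (-t)).le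
  have h6 : t * Real.exp (-t) ≤ 1 - Real.exp (-t) := by nlinarith
  have h7 : t * Real.exp (-4) ≤ t * Real.exp (-t) :=
    mul_le_mul_of_nonneg_left h1 h0
  linarith

lemma aux_telescope (x : ℝ) (N : ℕ) :
    (∑ k ∈ Finset.range N, Real.cos (2 * (((k : ℝ) + 1) * x))) * (2 * Real.sin x)
      = Real.sin ((2 * N + 1) * x) - Real.sin x := by
  induction N with
  | zero => simp
  | succ n ih =>
    rw [Finset.sum_range_succ, add_mul, ih]
    have h := Real.sin_sub_sin ((2 * ((n : ℝ) + 1) + 1) * x) ((2 * n + 1) * x)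
    have h1 : ((2 * ((n : ℝ) + 1) + 1) * x - (2 * n + 1) * x) / 2 = x := by ring
    have h2 : ((2 * ((n : ℝ) + 1) + 1) * x + (2 * n + 1) * x) / 2
        = 2 * (((n : ℝ) + 1) * x) := by ring
    rw [h1, h2] at h
    push_cast
    linarith

set_option maxHeartbeats 1000000 in
theorem stmt_14 (x : ℝ) (hx : x ∈ Set.Ioo 0 Real.pi) :
    ∃ C > (0:ℝ), ∃ ε₀ > (0:ℝ), ∀ ε : ℝ, 0 < ε → ε < ε₀ →
      (1/2) * (∑' k : ℕ, (neumannEigen (k + 1) x)^2 *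
          (1 - Real.exp (-2 * (((k:ℝ) + 1)^2)^2 * (2 * ε))) / (2 * (((k:ℝ) + 1)^2)^2))
        + ε * (neumannEigen 0 x)^2
      ≥ C * (2 * ε) ^ ((3:ℝ)/4) := by
  obtain ⟨hx0, hxπ⟩ := hx
  have hπ : 0 < Real.pi := Real.pi_pos
  obtain ⟨s, hsdef⟩ : ∃ s : ℝ, s = Real.sin x := ⟨_, rfl⟩
  have hs : 0 < s := hsdef ▸ Real.sin_pos_of_pos_of_lt_pi hx0 hxπ
  obtain ⟨B, hBdef⟩ : ∃ B : ℝ, B = 2 / s + 2 := ⟨_, rfl⟩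
  have hBpos : 0 < B := by rw [hBdef]; positivity
  have hB2 : 2 ≤ B := by
    have : 0 ≤ 2 / s := by positivity
    linarith [hBdef.ge, hBdef.le]
  refine ⟨Real.exp (-4) / (8 * Real.pi), by positivity, (1 / B) ^ 4, by positivity, ?_⟩
  intro ε hε hεB
  obtain ⟨N, hNdef⟩ : ∃ N : ℕ, N = ⌊ε ^ (-(1/4) : ℝ)⌋₊ := ⟨_, rfl⟩
  have hεinv : 0 < ε ^ (-(1/4) : ℝ) := Real.rpow_pos_of_pos hε _
  -- B ≤ ε^(-1/4)
  have hB4 : B ^ (4 : ℕ) ≤ ε⁻¹ := by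
    have h2 : (1 / B) ^ 4 = (B ^ (4 : ℕ))⁻¹ := by rw [one_div, inv_pow]
    rw [le_inv_comm₀ (by positivity) hε]
    exact le_of_lt (h2 ▸ hεB)
  have hBle : B ≤ ε ^ (-(1/4) : ℝ) := by
    have h4 := Real.rpow_le_rpow (by positivity) hB4 (by norm_num : (0:ℝ) ≤ 1/4)
    have h5 : (B ^ (4 : ℕ)) ^ ((1:ℝ)/4) = B := by
      rw [← Real.rpow_natCast B 4, ← Real.rpow_mul hBpos.le]
      norm_num
    have h6 : (ε⁻¹) ^ ((1:ℝ)/4) = ε ^ (-(1/4) : ℝ) := by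
      rw [Real.rpow_neg hε.le, ← Real.inv_rpow hε.le]
    rw [h5, h6] at h4
    exact h4
  have hNreal : (N : ℝ) ≤ ε ^ (-(1/4) : ℝ) := by rw [hNdef]; exact Nat.floor_le hεinv.le
  have hNlow : ε ^ (-(1/4) : ℝ) < (N : ℝ) + 1 := by rw [hNdef]; exact Nat.lt_floor_add_one _
  have hN2s : 2 / s ≤ (N : ℝ) := by
    have := hBdef.le
    linarith
  have hNhalf : ε ^ (-(1/4) : ℝ) / 2 ≤ (N : ℝ) := by linarith
  -- for k < N, ε * (k+1)^4 ≤ 1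
  have hNpow : ∀ k : ℕ, k < N → ε * (((k : ℝ) + 1) ^ 2) ^ 2 ≤ 1 := by
    intro k hk
    have hk1 : ((k : ℝ) + 1) ≤ ε ^ (-(1/4) : ℝ) := by
      have : (k : ℝ) + 1 ≤ (N : ℝ) := by exact_mod_cast Nat.succ_le_of_lt hk
      linarith
    have hk2 : (((k : ℝ) + 1) ^ 2) ^ 2 ≤ (ε ^ (-(1/4) : ℝ)) ^ (4 : ℕ) := by
      rw [← pow_mul]
      exact pow_le_pow_left₀ (by positivity) hk1 4
    have hk3 : (ε ^ (-(1/4) : ℝ)) ^ (4 : ℕ) = ε⁻¹ := by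
      rw [← Real.rpow_natCast (ε ^ (-(1/4) : ℝ)) 4, ← Real.rpow_mul hε.le]
      norm_num [Real.rpow_neg_one]
    calc ε * (((k : ℝ) + 1) ^ 2) ^ 2 ≤ ε * ε⁻¹ :=
          mul_le_mul_of_nonneg_left (hk3 ▸ hk2) hε.le
      _ = 1 := mul_inv_cancel₀ hε.ne'
  -- the summand
  obtain ⟨f, hfdef⟩ : ∃ f : ℕ → ℝ, f = fun k => (neumannEigen (k + 1) x)^2 *
      (1 - Real.exp (-2 * (((k:ℝ) + 1)^2)^2 * (2 * ε))) / (2 * (((k:ℝ) + 1)^2)^2) := ⟨_, rfl⟩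
  rw [show (∑' k : ℕ, (neumannEigen (k + 1) x)^2 *
      (1 - Real.exp (-2 * (((k:ℝ) + 1)^2)^2 * (2 * ε))) / (2 * (((k:ℝ) + 1)^2)^2))
      = ∑' k, f k from by rw [hfdef]]
  have hfval : ∀ k : ℕ, f k = (2 / Real.pi) * Real.cos (((k : ℝ) + 1) * x) ^ 2 *
      (1 - Real.exp (-(4 * ε * (((k:ℝ) + 1)^2)^2))) / (2 * (((k:ℝ) + 1)^2)^2) := by
    intro k
    have h1 : neumannEigen (k + 1) x = Real.sqrt (2 / Real.pi) * Real.cos (((k : ℝ) + 1) * x) := by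
      rw [neumannEigen]
      simp only [Nat.succ_ne_zero, if_false]
      push_cast
      ring_nf
    rw [hfdef]
    simp only [h1]
    rw [mul_pow, Real.sq_sqrt (by positivity : (0:ℝ) ≤ 2 / Real.pi)]
    congr 3
    ring_nf
  have hfnonneg : ∀ k : ℕ, 0 ≤ f k := by
    intro k
    rw [hfval k]
    have hexp : Real.exp (-(4 * ε * (((k:ℝ) + 1)^2)^2)) ≤ 1 := by
      rw [Real.exp_le_one_iff]
      have : (0:ℝ) ≤ 4 * ε * (((k:ℝ) + 1)^2)^2 := by positivity
      linarith
    have h2 : (0:ℝ) ≤ 1 - Real.exp (-(4 * ε * (((k:ℝ) + 1)^2)^2)) := by linarith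
    positivity
  have hg : Summable (fun k : ℕ => (1 / Real.pi) * (1 / ((k : ℝ) + 1) ^ 4)) := by
    apply Summable.mul_left
    have h := (summable_nat_add_iff (f := fun n => 1 / (n : ℝ) ^ 4) 1).mpr
      (Real.summable_one_div_nat_pow.mpr (by norm_num))
    apply h.congr
    intro n
    push_cast
    ring_nf
  have hfsummable : Summable f := by
    apply Summable.of_nonneg_of_le hfnonneg ?_ hg
    intro k
    rw [hfval k]
    have hexp : 0 < Real.exp (-(4 * ε * (((k:ℝ) + 1)^2)^2)) := Real.exp_pos _
    have hcos : Real.cos (((k : ℝ) + 1) * x) ^ 2 ≤ 1 := by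
      have := Real.neg_one_le_cos (((k : ℝ) + 1) * x)
      have := Real.cos_le_one (((k : ℝ) + 1) * x)
      nlinarith
    have hk4 : (0:ℝ) < ((k:ℝ) + 1) ^ 4 := by positivity
    rw [div_le_iff₀ (by positivity)]
    have h2 : (1 - Real.exp (-(4 * ε * (((k:ℝ) + 1)^2)^2))) ≤ 1 := by linarith
    have h3 : 0 ≤ (1 - Real.exp (-(4 * ε * (((k:ℝ) + 1)^2)^2))) := by
      have : Real.exp (-(4 * ε * (((k:ℝ) + 1)^2)^2)) ≤ 1 := by
        rw [Real.exp_le_one_iff]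
        have : (0:ℝ) ≤ 4 * ε * (((k:ℝ) + 1)^2)^2 := by positivity
        linarith
      linarith
    have h5 : Real.cos (((k : ℝ) + 1) * x) ^ 2 *
        (1 - Real.exp (-(4 * ε * (((k:ℝ) + 1)^2)^2))) ≤ 1 := mul_le_one₀ hcos h3 h2
    calc (2 / Real.pi) * Real.cos (((k : ℝ) + 1) * x) ^ 2 *
          (1 - Real.exp (-(4 * ε * (((k:ℝ) + 1)^2)^2)))
        = (2 / Real.pi) * (Real.cos (((k : ℝ) + 1) * x) ^ 2 *
            (1 - Real.exp (-(4 * ε * (((k:ℝ) + 1)^2)^2)))) := by ring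
      _ ≤ (2 / Real.pi) * 1 := mul_le_mul_of_nonneg_left h5 (by positivity)
      _ = 1 / Real.pi * (1 / ((k:ℝ) + 1) ^ 4) * (2 * (((k:ℝ) + 1) ^ 2) ^ 2) := by
          field_simp
  -- lower bound each term for k < N
  have hterm : ∀ k ∈ Finset.range N,
      (2 / Real.pi) * Real.cos (((k : ℝ) + 1) * x) ^ 2 * (2 * ε * Real.exp (-4)) ≤ f k := by
    intro k hk
    rw [Finset.mem_range] at hk
    rw [hfval k]
    obtain ⟨M, hMdef⟩ : ∃ M : ℝ, M = (((k:ℝ) + 1)^2)^2 := ⟨_, rfl⟩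
    rw [← hMdef]
    have hM : (0:ℝ) < M := by rw [hMdef]; positivity
    have hεM : ε * M ≤ 1 := hMdef ▸ hNpow k hk
    have h1 : 4 * ε * M * Real.exp (-4) ≤ 1 - Real.exp (-(4 * ε * M)) :=
      aux_exp_lb (by positivity) (by nlinarith)
    have hA : (0:ℝ) ≤ (2 / Real.pi) * Real.cos (((k : ℝ) + 1) * x) ^ 2 := by positivity
    calc (2 / Real.pi) * Real.cos (((k : ℝ) + 1) * x) ^ 2 * (2 * ε * Real.exp (-4))
        = (2 / Real.pi) * Real.cos (((k : ℝ) + 1) * x) ^ 2 *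
            (4 * ε * M * Real.exp (-4)) / (2 * M) := by
          field_simp
          ring
      _ ≤ (2 / Real.pi) * Real.cos (((k : ℝ) + 1) * x) ^ 2 *
            (1 - Real.exp (-(4 * ε * M))) / (2 * M) := by
          gcongr
  -- sum of cos^2 lower bound
  have hT : -(1 / s) ≤ ∑ k ∈ Finset.range N, Real.cos (2 * (((k : ℝ) + 1) * x)) := by
    have h1 := aux_telescope x N
    rw [← hsdef] at h1
    have h2 : Real.sin ((2 * (N:ℝ) + 1) * x) - s ≥ -2 := by
      have := Real.neg_one_le_sin ((2 * (N:ℝ) + 1) * x)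
      have h2' : s ≤ 1 := hsdef ▸ Real.sin_le_one x
      linarith
    have h3 : -2 ≤ (∑ k ∈ Finset.range N, Real.cos (2 * (((k : ℝ) + 1) * x))) * (2 * s) := by
      rw [h1]; linarith
    have h4 : (-1) / s ≤ ∑ k ∈ Finset.range N, Real.cos (2 * (((k : ℝ) + 1) * x)) := by
      rw [div_le_iff₀ hs]
      linarith
    have h5 : -(1 / s) = (-1) / s := by ring
    rw [h5]
    exact h4
  have hcossq : (N : ℝ) / 4 ≤ ∑ k ∈ Finset.range N, Real.cos (((k : ℝ) + 1) * x) ^ 2 := by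
    have h1 : ∑ k ∈ Finset.range N, Real.cos (((k : ℝ) + 1) * x) ^ 2
        = ∑ k ∈ Finset.range N, (1 / 2 + Real.cos (2 * (((k : ℝ) + 1) * x)) / 2) :=
      Finset.sum_congr rfl fun k _ => Real.cos_sq _
    rw [h1, Finset.sum_add_distrib, Finset.sum_const, Finset.card_range, ← Finset.sum_div]
    have h2 : 1 / s ≤ (N : ℝ) / 2 := by
      have h2' : 1 / s = (2 / s) / 2 := by ring
      rw [h2']
      linarith
    have h3 := hT
    rw [nsmul_eq_mul]
    push_cast
    linarith
  -- assemble
  have hsum : ε * Real.exp (-4) * (N : ℝ) / Real.pi ≤ ∑ k ∈ Finset.range N, f k := by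
    calc ε * Real.exp (-4) * (N : ℝ) / Real.pi
        = (2 / Real.pi) * (2 * ε * Real.exp (-4)) * ((N : ℝ) / 4) := by ring
      _ ≤ (2 / Real.pi) * (2 * ε * Real.exp (-4)) *
            (∑ k ∈ Finset.range N, Real.cos (((k : ℝ) + 1) * x) ^ 2) := by
          apply mul_le_mul_of_nonneg_left hcossq (by positivity)
      _ = ∑ k ∈ Finset.range N,
            (2 / Real.pi) * Real.cos (((k : ℝ) + 1) * x) ^ 2 * (2 * ε * Real.exp (-4)) := by
          rw [Finset.mul_sum]
          exact Finset.sum_congr rfl fun k _ => by ring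
      _ ≤ ∑ k ∈ Finset.range N, f k := Finset.sum_le_sum hterm
  have htsum : ∑ k ∈ Finset.range N, f k ≤ ∑' k, f k :=
    Summable.sum_le_tsum _ (fun k _ => hfnonneg k) hfsummable
  -- final computation
  have hεN : ε ^ ((3:ℝ)/4) / 2 ≤ ε * (N : ℝ) := by
    have h1 : ε * (ε ^ (-(1/4) : ℝ) / 2) ≤ ε * (N : ℝ) :=
      mul_le_mul_of_nonneg_left hNhalf hε.le
    have h2 : ε * ε ^ (-(1/4) : ℝ) = ε ^ ((3:ℝ)/4) := by
      rw [show (3:ℝ)/4 = 1 + -(1/4) by norm_num, Real.rpow_add hε, Real.rpow_one]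
    have h3 : ε * (ε ^ (-(1/4) : ℝ) / 2) = ε ^ ((3:ℝ)/4) / 2 := by rw [← h2]; ring
    linarith
  have h2ε : (2 * ε) ^ ((3:ℝ)/4) ≤ 2 * ε ^ ((3:ℝ)/4) := by
    rw [Real.mul_rpow (by norm_num) hε.le]
    have h1 : (2:ℝ) ^ ((3:ℝ)/4) ≤ (2:ℝ) ^ (1:ℝ) :=
      Real.rpow_le_rpow_of_exponent_le (by norm_num) (by norm_num)
    rw [Real.rpow_one] at h1
    exact mul_le_mul_of_nonneg_right h1 (Real.rpow_nonneg hε.le _)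
  have ha0 : 0 ≤ ε * (neumannEigen 0 x)^2 := by positivity
  calc Real.exp (-4) / (8 * Real.pi) * (2 * ε) ^ ((3:ℝ)/4)
      ≤ Real.exp (-4) / (8 * Real.pi) * (2 * ε ^ ((3:ℝ)/4)) := by
        apply mul_le_mul_of_nonneg_left h2ε (by positivity)
    _ = Real.exp (-4) / (2 * Real.pi) * (ε ^ ((3:ℝ)/4) / 2) := by ring
    _ ≤ Real.exp (-4) / (2 * Real.pi) * (ε * (N : ℝ)) := by
        apply mul_le_mul_of_nonneg_left hεN (by positivity)
    _ = (1/2) * (ε * Real.exp (-4) * (N : ℝ) / Real.pi) := by ring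
    _ ≤ (1/2) * (∑ k ∈ Finset.range N, f k) := by
        apply mul_le_mul_of_nonneg_left hsum (by norm_num)
    _ ≤ (1/2) * (∑' k, f k) := by
        apply mul_le_mul_of_nonneg_left htsum (by norm_num)
    _ ≤ (1/2) * (∑' k, f k) + ε * (neumannEigen 0 x)^2 := le_add_of_nonneg_right ha0
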